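/- arXiv:1509.04251 — 3 statements merged into one kernel-verified Lean document; each statement's English description precedes it below -/
import Mathlib

section
/- Let B be a complex unital Banach algebra and let a, d ∈ B be such that a is invertible along d. Then there is a punctured neighbourhood of 0 in ℂ on which d·a + t·1 is invertible, and the limit of (d·a + t·1)⁻¹·d as t → 0 (t ≠ 0) exists and equals a^{∥d}. -/
open Filter

/-- `b` is the inverse of `a` along `d`: `b*a*b = b`, `bB = dB` and `Bb = Bd`. -/
def IsInverseAlong {B : Type*} [Ring B] (b a d : B) : Prop :=
  b * a * b = b ∧ {x : B | ∃ r, x = b * r} = {x : B | ∃ r, x = d * r} ∧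
    {x : B | ∃ r, x = r * b} = {x : B | ∃ r, x = r * d}

theorem stmt_12 {B : Type*} [NormedRing B] [NormedAlgebra ℂ B] [CompleteSpace B]
    (a d b : B) (h : IsInverseAlong b a d) :
    (∃ ε > (0 : ℝ), ∀ t : ℂ, t ≠ 0 → ‖t‖ < ε → IsUnit (d * a + t • (1 : B))) ∧
      Tendsto (fun t : ℂ => Ring.inverse (d * a + t • (1 : B)) * d)
        (nhdsWithin 0 {t : ℂ | t ≠ 0}) (nhds b) := by
  obtain ⟨hbab, hR, hL⟩ := h
  -- extract witnesses
  obtain ⟨w, hw⟩ : ∃ w, b = d * w := by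
    have : b ∈ {x : B | ∃ r, x = d * r} := hR ▸ ⟨1, (mul_one b).symm⟩
    exact this
  obtain ⟨s, hs⟩ : ∃ s, d = b * s := by
    have : d ∈ {x : B | ∃ r, x = b * r} := by
      rw [hR]; exact ⟨1, (mul_one d).symm⟩
    exact this
  obtain ⟨v, hv⟩ : ∃ v, b = v * d := by
    have : b ∈ {x : B | ∃ r, x = r * d} := hL ▸ ⟨1, (one_mul b).symm⟩
    exact this
  obtain ⟨r, hr⟩ : ∃ r, d = r * b := by
    have : d ∈ {x : B | ∃ r, x = r * b} := by
      rw [hL]; exact ⟨1, (one_mul d).symm⟩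
    exact this
  -- key algebraic identities
  have hbad : b * a * d = d := by
    rw [hs, ← mul_assoc, hbab]
  have hdab : d * a * b = d := by
    rw [hr, mul_assoc r b a, mul_assoc r (b * a) b, hbab]
  set y : B := b * a * v * b * a with hy
  have hyc : y * (d * a) = b * a := by
    calc y * (d * a) = (b * a * v) * ((b * a * d) * a) := by
          simp only [hy, mul_assoc]
      _ = (b * a * v) * (d * a) := by rw [hbad]
      _ = (b * a * (v * d)) * a := by simp only [mul_assoc]
      _ = b * a * b * a := by rw [← hv]
      _ = b * a := by rw [hbab]
  have hcy : (d * a) * y = b * a := by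
    calc (d * a) * y = (d * a * b) * (a * (v * (b * a))) := by
          simp only [hy, mul_assoc]
      _ = d * (a * (v * (b * a))) := by rw [hdab]
      _ = d * (a * (v * (d * w * a))) := by rw [← hw]
      _ = (d * a * (v * d)) * (w * a) := by simp only [mul_assoc]
      _ = (d * a * b) * (w * a) := by rw [← hv]
      _ = d * (w * a) := by rw [hdab]
      _ = (d * w) * a := by rw [mul_assoc]
      _ = b * a := by rw [← hw]
  have hyd : y * d = b := by
    calc y * d = (b * a * v) * (b * a * d) := by simp only [hy, mul_assoc]
      _ = (b * a * v) * d := by rw [hbad]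
      _ = (b * a) * (v * d) := by simp only [mul_assoc]
      _ = b * a * b := by rw [← hv]
      _ = b := hbab
  have hpc : (b * a) * (d * a) = d * a := by
    calc (b * a) * (d * a) = (b * a * d) * a := by simp only [mul_assoc]
      _ = d * a := by rw [hbad]
  have hcp : (d * a) * (b * a) = d * a := by
    calc (d * a) * (b * a) = (d * a * b) * a := by simp only [mul_assoc]
      _ = d * a := by rw [hdab]
  have hc1p : (d * a) * (1 - b * a) = 0 := by
    rw [mul_sub, mul_one, hcp, sub_self]
  have h1pc : (1 - b * a) * (d * a) = 0 := by
    rw [sub_mul, one_mul, hpc, sub_self]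
  have h1pd : (1 - b * a) * d = 0 := by
    rw [sub_mul, one_mul, hbad, sub_self]
  set ε : ℝ := (‖y‖ + 1)⁻¹ with hε
  have hε0 : 0 < ε := by positivity
  have key : ∀ t : ℂ, t ≠ 0 → ‖t‖ < ε →
      IsUnit (d * a + t • (1 : B)) ∧
        Ring.inverse (d * a + t • (1 : B)) * d = Ring.inverse (1 + t • y) * b := by
    intro t ht0 htε
    have hty : ‖t • y‖ < 1 := by
      rw [norm_smul]
      have h1 : ‖t‖ * (‖y‖ + 1) < 1 := by
        rw [hε] at htε
        have h2 : (0:ℝ) < ‖y‖ + 1 := by positivity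
        calc ‖t‖ * (‖y‖ + 1) < (‖y‖ + 1)⁻¹ * (‖y‖ + 1) := by
              exact mul_lt_mul_of_pos_right htε h2
          _ = 1 := inv_mul_cancel₀ (ne_of_gt h2)
      nlinarith [norm_nonneg t, norm_nonneg y]
    have hty' : ‖-(t • y)‖ < 1 := by rwa [norm_neg]
    set u1 : Bˣ := Units.oneSub (-(t • y)) hty' with hu1def
    have hu1 : (u1 : B) = 1 + t • y := by
      simp [hu1def, sub_neg_eq_add]
    set x : B := d * a + t • (1 : B) with hx
    set e : B := y + t⁻¹ • (1 - b * a) with he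
    have hxe : x * e = 1 + t • y := by
      simp only [hx, he, add_mul, mul_add, smul_mul_assoc, mul_smul_comm,
        one_mul, mul_one, smul_smul]
      rw [hcy, hc1p, zero_add, smul_smul, inv_mul_cancel₀ ht0, one_smul]
      abel
    have hex : e * x = 1 + t • y := by
      simp only [hx, he, add_mul, mul_add, smul_mul_assoc, mul_smul_comm,
        one_mul, mul_one, smul_smul]
      rw [hyc, h1pc, smul_zero, add_zero, smul_add, smul_smul, mul_inv_cancel₀ ht0, one_smul]
      abel
    have hxr : x * (e * ↑u1⁻¹) = 1 := by
      rw [← mul_assoc, hxe, ← hu1, u1.mul_inv]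
    have hlx : (↑u1⁻¹ * e) * x = 1 := by
      rw [mul_assoc, hex, ← hu1, u1.inv_mul]
    have hrl : e * ↑u1⁻¹ = ↑u1⁻¹ * e := by
      calc e * ↑u1⁻¹ = 1 * (e * ↑u1⁻¹) := (one_mul _).symm
        _ = ((↑u1⁻¹ * e) * x) * (e * ↑u1⁻¹) := by rw [hlx]
        _ = (↑u1⁻¹ * e) * (x * (e * ↑u1⁻¹)) := by simp only [mul_assoc]
        _ = ↑u1⁻¹ * e := by rw [hxr, mul_one]
    have hrx : (e * ↑u1⁻¹) * x = 1 := by rw [hrl]; exact hlx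
    set U : Bˣ := ⟨x, e * ↑u1⁻¹, hxr, hrx⟩ with hU
    have hunit : IsUnit x := ⟨U, rfl⟩
    refine ⟨hunit, ?_⟩
    have hinv : Ring.inverse x = e * ↑u1⁻¹ := by
      have : Ring.inverse (U : B) = ↑U⁻¹ := Ring.inverse_unit U
      simpa [hU] using this
    have hed : e * d = b := by
      rw [he, add_mul, smul_mul_assoc, h1pd, smul_zero, add_zero, hyd]
    have hinv1 : Ring.inverse (1 + t • y) = ↑u1⁻¹ := by
      rw [← hu1, Ring.inverse_unit]
    rw [hinv, hinv1, hrl, mul_assoc, hed]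
  constructor
  · exact ⟨ε, hε0, fun t ht0 htε => (key t ht0 htε).1⟩
  · have hcont : Tendsto (fun t : ℂ => Ring.inverse (1 + t • y) * b) (nhds 0) (nhds b) := by
      have h1 : Tendsto (fun t : ℂ => 1 + t • y) (nhds 0) (nhds 1) := by
        have h1' : ContinuousAt (fun t : ℂ => 1 + t • y) 0 := by fun_prop
        simpa using h1'.tendsto
      have h2 : Tendsto Ring.inverse (nhds (1 : B)) (nhds (Ring.inverse (1 : B))) := by
        have := (NormedRing.inverse_continuousAt (1 : Bˣ)).tendsto
        simpa using this
      have h3 : Tendsto (fun t : ℂ => Ring.inverse (1 + t • y)) (nhds 0)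
          (nhds (Ring.inverse (1 : B))) := h2.comp h1
      have h4 := h3.mul (tendsto_const_nhds (x := b))
      simpa [Ring.inverse_one] using h4
    have hev : ∀ᶠ t in nhdsWithin (0:ℂ) {t : ℂ | t ≠ 0},
        Ring.inverse (1 + t • y) * b = Ring.inverse (d * a + t • (1 : B)) * d := by
      have hball : ∀ᶠ t in nhdsWithin (0:ℂ) {t : ℂ | t ≠ 0}, ‖t‖ < ε :=
        eventually_nhdsWithin_of_eventually_nhds <| by
          have := Metric.ball_mem_nhds (0:ℂ) hε0
          filter_upwards [this] with t ht
          simpa [mem_ball_zero_iff] using ht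
      have hne : ∀ᶠ t in nhdsWithin (0:ℂ) {t : ℂ | t ≠ 0}, t ≠ 0 :=
        eventually_mem_nhdsWithin
      filter_upwards [hball, hne] with t htε ht0
      exact ((key t ht0 htε).2).symm
    exact Tendsto.congr' hev (hcont.mono_left nhdsWithin_le_nhds)
end

section
/- Let B be a complex unital Banach algebra and let a, d, f ∈ B with d regular. If f ∈ dB and a is invertible along d, then d·a + t·1 is invertible for all small t ≠ 0, the limit of (d·a + t·1)⁻¹·f as t → 0 (t ≠ 0) exists, and it equals a^{∥d}·d⁻·f for any inner inverse d⁻ of d. -/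
open Filter

lemma aux_key {B : Type*} [NormedRing B] [NormedAlgebra ℂ B] [CompleteSpace B]
    (a d f b di : B)
    (hdac : d*a*(b*di*(b*a)) = b*a)
    (hcda : (b*di*(b*a))*(d*a) = b*a)
    (hdap : d*a*(b*a) = d*a)
    (hpda : (b*a)*(d*a) = d*a)
    (hpf : (b*a)*f = f)
    (hcf : (b*di*(b*a))*f = b*di*f)
    (t : ℂ) (ht : t ≠ 0) (hts : ‖t • (b*di*(b*a))‖ < 1) :
    IsUnit (d*a + t•(1:B)) ∧
      Ring.inverse (d*a + t•(1:B)) * f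
        = Ring.inverse ((1:B) + t•(b*di*(b*a))) * (b*di*f) := by
  set c := b*di*(b*a) with hcdef
  set p := b*a with hpdef
  have hu1 : IsUnit ((1:B) + t•c) := by
    have h := (Units.oneSub (-(t•c)) (by simpa using hts)).isUnit
    simpa [sub_neg_eq_add] using h
  set z := Ring.inverse ((1:B) + t•c) with hz
  have hz1 : ((1:B)+t•c) * z = 1 := Ring.mul_inverse_cancel _ hu1
  have hz2 : z * ((1:B)+t•c) = 1 := Ring.inverse_mul_cancel _ hu1
  have hcomm : (d*a + t•(1:B)) * ((1:B)+t•c) = ((1:B)+t•c) * (d*a + t•(1:B)) := by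
    have L : (d*a + t•(1:B)) * ((1:B)+t•c) = d*a + t•p + t•(1:B) + (t*t)•c := by
      simp only [mul_add, add_mul, mul_one, one_mul, mul_smul_comm, smul_mul_assoc,
        smul_smul, hdac]
      module
    have R : ((1:B)+t•c) * (d*a + t•(1:B)) = d*a + t•p + t•(1:B) + (t*t)•c := by
      simp only [mul_add, add_mul, mul_one, one_mul, mul_smul_comm, smul_mul_assoc,
        smul_smul, hcda]
      module
    rw [L, R]
  have hzcomm : (d*a + t•(1:B)) * z = z * (d*a + t•(1:B)) := by
    calc (d*a + t•(1:B)) * z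
        = z * (((1:B)+t•c) * ((d*a + t•(1:B)) * z)) := by rw [← mul_assoc, hz2, one_mul]
      _ = z * ((d*a + t•(1:B)) * (((1:B)+t•c) * z)) := by
          rw [← mul_assoc ((1:B)+t•c), ← hcomm, mul_assoc]
      _ = z * (d*a + t•(1:B)) := by rw [hz1, mul_one]
  have e2 : t • (t⁻¹ • ((1:B)-p)) = (1:B)-p := by
    rw [smul_smul, mul_inv_cancel₀ ht, one_smul]
  have hmul1 : (d*a + t•(1:B)) * (c + t⁻¹ • ((1:B) - p)) = (1:B)+t•c := by
    have e1 : d*a*((1:B)-p) = 0 := by rw [mul_sub, mul_one, hdap, sub_self]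
    calc (d*a + t•(1:B)) * (c + t⁻¹ • ((1:B) - p))
        = d*a*c + t⁻¹ • (d*a*((1:B)-p)) + (t • c + t • (t⁻¹ • ((1:B)-p))) := by
          simp only [mul_add, add_mul, smul_mul_assoc, one_mul, mul_smul_comm]
          module
      _ = p + t⁻¹ • (0:B) + (t • c + ((1:B)-p)) := by rw [hdac, e1, e2]
      _ = (1:B)+t•c := by rw [smul_zero]; abel
  have hmul2 : (c + t⁻¹ • ((1:B) - p)) * (d*a + t•(1:B)) = (1:B)+t•c := by
    have e1 : ((1:B)-p)*(d*a) = 0 := by rw [sub_mul, one_mul, hpda, sub_self]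
    calc (c + t⁻¹ • ((1:B) - p)) * (d*a + t•(1:B))
        = c*(d*a) + t • (c * 1) + (t⁻¹ • (((1:B)-p)*(d*a)) + t⁻¹ • (t • (((1:B)-p) * 1))) := by
          simp only [mul_add, add_mul, smul_mul_assoc, mul_smul_comm]
          module
      _ = p + t • c + (t⁻¹ • (0:B) + t • (t⁻¹ • ((1:B)-p))) := by
          rw [hcda, e1, mul_one, mul_one, smul_comm t⁻¹ t]
      _ = (1:B)+t•c := by rw [smul_zero, e2]; abel
  set X := z * (c + t⁻¹ • ((1:B) - p)) with hX
  have h1 : (d*a + t•(1:B)) * X = 1 := by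
    rw [hX, ← mul_assoc, hzcomm, mul_assoc, hmul1, hz2]
  have h2 : X * (d*a + t•(1:B)) = 1 := by rw [hX, mul_assoc, hmul2, hz2]
  refine ⟨⟨⟨_, X, h1, h2⟩, rfl⟩, ?_⟩
  have hinv : Ring.inverse (d*a + t•(1:B)) = X :=
    Ring.inverse_unit (⟨d*a + t•(1:B), X, h1, h2⟩ : Bˣ)
  rw [hinv, hX, mul_assoc]
  congr 1
  have e3 : ((1:B)-p)*f = 0 := by rw [sub_mul, one_mul, hpf, sub_self]
  rw [add_mul, smul_mul_assoc, e3, smul_zero, add_zero, hcf]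

theorem stmt_15 {B : Type*} [NormedRing B] [NormedAlgebra ℂ B] [CompleteSpace B]
    (a d f b : B) (h : IsInverseAlong b a d) (hf : ∃ u, f = d * u) :
    (∃ ε > (0 : ℝ), ∀ t : ℂ, t ≠ 0 → ‖t‖ < ε → IsUnit (d * a + t • (1 : B))) ∧
      ∀ di, d * di * d = d →
        Tendsto (fun t : ℂ => Ring.inverse (d * a + t • (1 : B)) * f)
          (nhdsWithin 0 {t : ℂ | t ≠ 0}) (nhds (b * di * f)) := by
  obtain ⟨hbab, hS1, hS2⟩ := h
  obtain ⟨u, hu⟩ : ∃ u, b = d * u := by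
    have h0 : b ∈ {x : B | ∃ r, x = b * r} := ⟨1, (mul_one b).symm⟩
    rw [hS1] at h0; exact h0
  obtain ⟨v, hv⟩ : ∃ v, d = b * v := by
    have h0 : d ∈ {x : B | ∃ r, x = d * r} := ⟨1, (mul_one d).symm⟩
    rw [← hS1] at h0; exact h0
  obtain ⟨w, hw⟩ : ∃ w, b = w * d := by
    have h0 : b ∈ {x : B | ∃ r, x = r * b} := ⟨1, (one_mul b).symm⟩
    rw [hS2] at h0; exact h0
  obtain ⟨x, hx⟩ : ∃ x, d = x * b := by
    have h0 : d ∈ {x : B | ∃ r, x = r * d} := ⟨1, (one_mul d).symm⟩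
    rw [← hS2] at h0; exact h0
  obtain ⟨u', hf'⟩ := hf
  have hbad : b * a * d = d := by
    conv_lhs => rw [hv, ← mul_assoc, hbab]
    exact hv.symm
  have hdab : d * a * b = d := by
    conv_lhs => rw [hx, mul_assoc, mul_assoc, ← mul_assoc b a b, hbab]
    exact hx.symm
  have hids : ∀ di : B, d * di * d = d →
      (d*a*(b*di*(b*a)) = b*a) ∧ ((b*di*(b*a))*(d*a) = b*a) ∧
      (d*a*(b*a) = d*a) ∧ ((b*a)*(d*a) = d*a) ∧
      ((b*a)*f = f) ∧ ((b*di*(b*a))*f = b*di*f) := by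
    intro di hdi
    have hddib : d * di * b = b := by
      conv_lhs => rw [hu, ← mul_assoc, hdi]
      exact hu.symm
    have hbdid : b * di * d = b := by
      conv_lhs => rw [hw, mul_assoc, mul_assoc, ← mul_assoc d di d, hdi]
      exact hw.symm
    have hpf : (b*a)*f = f := by rw [hf', ← mul_assoc, hbad]
    refine ⟨?_, ?_, ?_, ?_, hpf, ?_⟩
    · calc d*a*(b*di*(b*a)) = (d*a*b)*di*(b*a) := by noncomm_ring
        _ = (d*di*b)*a := by rw [hdab]; noncomm_ring
        _ = b*a := by rw [hddib]
    · calc (b*di*(b*a))*(d*a) = (b*di)*((b*a*d)*a) := by noncomm_ring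
        _ = (b*di*d)*a := by rw [hbad]; noncomm_ring
        _ = b*a := by rw [hbdid]
    · calc d*a*(b*a) = (d*a*b)*a := by noncomm_ring
        _ = d*a := by rw [hdab]
    · calc (b*a)*(d*a) = (b*a*d)*a := by noncomm_ring
        _ = d*a := by rw [hbad]
    · calc (b*di*(b*a))*f = (b*di)*((b*a)*f) := by noncomm_ring
        _ = b*di*f := by rw [hpf]
  constructor
  · have hdi0 : d * (u*a) * d = d := by
      rw [← mul_assoc, ← hu, hbad]
    obtain ⟨h1, h2, h3, h4, h5, h6⟩ := hids (u*a) hdi0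
    refine ⟨(‖b*(u*a)*(b*a)‖ + 1)⁻¹, by positivity, fun t ht hts => ?_⟩
    have hsm : ‖t • (b*(u*a)*(b*a))‖ < 1 := by
      have hns : ‖t • (b*(u*a)*(b*a))‖ ≤ ‖t‖ * ‖b*(u*a)*(b*a)‖ := norm_smul_le _ _
      have hpos : (0:ℝ) < ‖b*(u*a)*(b*a)‖ + 1 := by positivity
      have hlt : ‖t‖ * ‖b*(u*a)*(b*a)‖ < 1 := by
        calc ‖t‖ * ‖b*(u*a)*(b*a)‖ ≤ ‖t‖ * (‖b*(u*a)*(b*a)‖ + 1) := by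
              nlinarith [norm_nonneg t]
          _ < (‖b*(u*a)*(b*a)‖ + 1)⁻¹ * (‖b*(u*a)*(b*a)‖ + 1) :=
              mul_lt_mul_of_pos_right hts hpos
          _ = 1 := inv_mul_cancel₀ (ne_of_gt hpos)
      linarith
    exact (aux_key a d f b (u*a) h1 h2 h3 h4 h5 h6 t ht hsm).1
  · intro di hdi
    obtain ⟨h1, h2, h3, h4, h5, h6⟩ := hids di hdi
    set c := b*di*(b*a) with hcdef
    have hcont : Tendsto (fun t : ℂ => Ring.inverse ((1:B) + t•c) * (b*di*f))
        (nhds 0) (nhds (b*di*f)) := by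
      have hc1 : Tendsto (fun t : ℂ => (1:B) + t•c) (nhds 0) (nhds 1) := by
        have hcc : Continuous fun t : ℂ => (1:B) + t•c := continuous_const.add (continuous_id.smul continuous_const)
        simpa using hcc.tendsto 0
      have hc2 : ContinuousAt (Ring.inverse : B → B) 1 := by
        simpa using NormedRing.inverse_continuousAt (1 : Bˣ)
      have := Tendsto.mul (hc2.tendsto.comp hc1)
        (tendsto_const_nhds : Tendsto (fun _ : ℂ => b*di*f) (nhds 0) (nhds (b*di*f)))
      simpa [Function.comp, Ring.inverse_one] using this
    refine Tendsto.congr' ?_ (hcont.mono_left nhdsWithin_le_nhds)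
    have hball : ∀ᶠ t : ℂ in nhdsWithin 0 {t : ℂ | t ≠ 0}, ‖t‖ < (‖c‖ + 1)⁻¹ := by
      apply Filter.Eventually.filter_mono nhdsWithin_le_nhds
      have hn : Tendsto (fun t : ℂ => ‖t‖) (nhds 0) (nhds 0) := by
        simpa using continuous_norm.tendsto (0:ℂ)
      exact hn.eventually_lt_const (by positivity)
    filter_upwards [self_mem_nhdsWithin, hball] with t ht hts
    have ht' : t ≠ 0 := ht
    have hsm : ‖t • c‖ < 1 := by
      have hns : ‖t • c‖ ≤ ‖t‖ * ‖c‖ := norm_smul_le _ _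
      have hpos : (0:ℝ) < ‖c‖ + 1 := by positivity
      have hlt : ‖t‖ * ‖c‖ < 1 := by
        calc ‖t‖ * ‖c‖ ≤ ‖t‖ * (‖c‖ + 1) := by nlinarith [norm_nonneg t]
          _ < (‖c‖ + 1)⁻¹ * (‖c‖ + 1) := mul_lt_mul_of_pos_right hts hpos
          _ = 1 := inv_mul_cancel₀ (ne_of_gt hpos)
      linarith
    exact ((aux_key a d f b di h1 h2 h3 h4 h5 h6 t ht' hsm).2).symm
end

section
/- Let B be a complex unital Banach algebra, let a ∈ B and let d ∈ B be regular with inner inverse d⁻; set p = d·d⁻. If there exists a real number β ≠ 0 such that ‖p − β·d·a·p‖ < 1, then a is invertible along d and a^{∥d} = β·∑_{n=0}^∞ (1 − β·d·a)ⁿ·d (the series converging in B). -/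
theorem stmt_16 {B : Type*} [NormedRing B] [NormedAlgebra ℂ B] [CompleteSpace B]
    (a d di : B) (hdi : d * di * d = d) (β : ℝ) (hβ : β ≠ 0)
    (hnorm : ‖d * di - (β : ℂ) • (d * a * (d * di))‖ < 1) :
    ∃ b, IsInverseAlong b a d ∧
      HasSum (fun n : ℕ => (β : ℂ) • ((1 - (β : ℂ) • (d * a)) ^ n * d)) b := by
  set κ : ℂ := (β : ℂ) with hκ
  set q : B := d * di - κ • (d * a * (d * di)) with hq
  have k1 : ∀ x : B, d * (di * (d * x)) = d * x := by
    intro x; rw [← mul_assoc, ← mul_assoc, hdi]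
  have k2 : d * (di * d) = d := by rw [← mul_assoc]; exact hdi
  have hdap : κ • (d * a) * (d * di) = d * di - q := by
    rw [hq, smul_mul_assoc]; abel
  have hpq : d * di * q = q := by
    rw [hq]
    simp only [mul_sub, mul_smul_comm, smul_mul_assoc, mul_assoc, k1]
  have hpqd : ∀ n : ℕ, d * di * (q ^ n * d) = q ^ n * d := by
    intro n
    cases n with
    | zero => simpa using hdi
    | succ m =>
      rw [pow_succ', mul_assoc q]
      rw [← mul_assoc, hpq]
  have hud : ∀ n : ℕ, (1 - κ • (d * a)) ^ n * d = q ^ n * d := by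
    intro n
    induction n with
    | zero => simp
    | succ m ih =>
      have h2 : κ • (d * a) * (q ^ m * d) = q ^ m * d - q ^ (m + 1) * d := by
        conv_lhs => rw [← hpqd m]
        rw [← mul_assoc, hdap, sub_mul, hpqd m]
        conv_rhs => rw [pow_succ', mul_assoc]
      rw [pow_succ', mul_assoc, ih, sub_mul, one_mul, h2]
      abel
  have hq1 : ‖q‖ < 1 := hnorm
  have hsum : Summable (fun n : ℕ => q ^ n) := summable_geometric_of_norm_lt_one hq1
  set s : B := ∑' n : ℕ, q ^ n with hs
  have hgs : HasSum (fun n : ℕ => q ^ n) s := hsum.hasSum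
  have hs1 : s * (1 - q) = 1 := geom_series_mul_neg q hq1
  have hs2 : (1 - q) * s = 1 := mul_neg_geom_series q hq1
  have hsq : s * q = s - 1 := by
    rw [mul_sub, mul_one] at hs1
    rw [← hs1]; abel
  have hqs : q * s = s - 1 := by
    rw [sub_mul, one_mul] at hs2
    rw [← hs2]; abel
  set b : B := κ • (s * d) with hb
  have hpsd : d * di * (s * d) = s * d := by
    have h1 : HasSum (fun n : ℕ => q ^ n * d) (s * d) := hgs.mul_right d
    have h2 : HasSum (fun n : ℕ => d * di * (q ^ n * d)) (d * di * (s * d)) :=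
      h1.mul_left (d * di)
    have h3 : HasSum (fun n : ℕ => q ^ n * d) (d * di * (s * d)) := by
      simpa only [hpqd] using h2
    exact h3.unique h1
  have hdab : d * a * b = d := by
    have e0 : d * a * b = κ • (d * a) * (s * d) := by
      rw [hb]
      simp only [smul_mul_assoc, mul_smul_comm, mul_assoc]
    have e1 : κ • (d * a) * (s * d) = (d * di - q) * (s * d) := by
      conv_lhs => rw [← hpsd]
      conv_rhs => rw [← hdap, mul_assoc]
    have e2 : (d * di - q) * (s * d) = d := by
      rw [sub_mul, hpsd, ← mul_assoc, hqs, sub_mul, one_mul]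
      abel
    rw [e0, e1, e2]
  have hbad : b * a * d = d := by
    have e0 : b * a * d = κ • (s * (d * (a * d))) := by
      rw [hb]
      simp only [smul_mul_assoc, mul_smul_comm, mul_assoc]
    have e1 : κ • (s * (d * (a * d))) = s * ((d * di - q) * d) := by
      rw [← hdap]
      simp only [smul_mul_assoc, mul_smul_comm, mul_assoc, k2]
    have e2 : s * ((d * di - q) * d) = d := by
      rw [sub_mul, hdi, mul_sub, ← mul_assoc, hsq, sub_mul, one_mul]
      abel
    rw [e0, e1, e2]
  have hbab : b * a * b = b := by
    have e0 : b * a * b = κ • (s * (d * (a * b))) := by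
      nth_rewrite 1 [hb]
      simp only [smul_mul_assoc, mul_smul_comm, mul_assoc]
    have e1 : d * (a * b) = d := by rw [← mul_assoc, hdab]
    rw [e0, e1]
  set c : B := di - κ • (a * (d * di)) with hc
  have hdc : d * c = q := by
    rw [hc, hq]
    simp only [mul_sub, mul_smul_comm, mul_assoc]
  have hsplit : s = 1 + q * s := by rw [hqs]; abel
  have hby : b = d * (κ • (1 + c * (s * d))) := by
    rw [hb]
    nth_rewrite 1 [hsplit]
    rw [← hdc]
    simp only [add_mul, one_mul, mul_add, mul_one, smul_add, smul_mul_assoc,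
      mul_smul_comm, mul_assoc]
  refine ⟨b, ⟨hbab, ?_, ?_⟩, ?_⟩
  · ext x
    simp only [Set.mem_setOf_eq]
    constructor
    · rintro ⟨r, rfl⟩
      exact ⟨κ • (1 + c * (s * d)) * r, by rw [hby, mul_assoc]⟩
    · rintro ⟨r, rfl⟩
      exact ⟨a * (d * r), by rw [← mul_assoc, ← mul_assoc, hbad]⟩
  · ext x
    simp only [Set.mem_setOf_eq]
    constructor
    · rintro ⟨r, rfl⟩
      refine ⟨r * (κ • s), ?_⟩
      rw [hb]
      simp only [smul_mul_assoc, mul_smul_comm, mul_assoc]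
    · rintro ⟨r, rfl⟩
      exact ⟨r * (d * a), by rw [mul_assoc, hdab]⟩
  · have h1 : HasSum (fun n : ℕ => κ • (q ^ n * d)) b := by
      rw [hb]
      exact (hgs.mul_right d).const_smul κ
    simp only [hud]
    exact h1
end
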